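/- arXiv:math/0609053 — 2 statements merged into one kernel-verified Lean document; each statement's English description precedes it below -/
import Mathlib

section
/- Let W₈ = {x ∈ ℝ⁸ : Σxᵢ = 0}, let ε act on ℝ⁸ by cyclic shift and j by reversal j(x₁,…,x₈) = (x₈,…,x₂,x₁). Let L ⊂ W₈ be defined by x₁+x₂+x₃+x₄ = x₂+x₃+x₄+x₅ = x₃+x₄+x₅+x₆ = 0. Then ε²L = jL, and the minimal invariant family containing L under the group generated by ε and j consists of exactly the four subspaces L, εL, ε²L, ε³L. -/
/-- The cyclic shift `ε(x₁,…,x₈) = (x₈,x₁,…,x₇)` on `ℝ⁸`. -/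
def cyclicShift8 (x : Fin 8 → ℝ) : Fin 8 → ℝ := fun i => x (i - 1)

/-- The reversal `j(x₁,…,x₈) = (x₈,…,x₂,x₁)` on `ℝ⁸`. -/
def rev8 (x : Fin 8 → ℝ) : Fin 8 → ℝ := fun i => x i.rev

/-- The subspace `L ⊆ W₈` cut out by `x₁+x₂+x₃+x₄ = x₂+x₃+x₄+x₅ = x₃+x₄+x₅+x₆ = 0`
inside the sum-zero hyperplane `W₈ ⊆ ℝ⁸`. -/
def subspaceL8 : Set (Fin 8 → ℝ) :=
  {x | (∑ i, x i) = 0 ∧ x 0 + x 1 + x 2 + x 3 = 0 ∧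
    x 1 + x 2 + x 3 + x 4 = 0 ∧ x 2 + x 3 + x 4 + x 5 = 0}

def L1' : Set (Fin 8 → ℝ) :=
  {x | (∑ i, x i) = 0 ∧ x 1 + x 2 + x 3 + x 4 = 0 ∧
    x 2 + x 3 + x 4 + x 5 = 0 ∧ x 3 + x 4 + x 5 + x 6 = 0}
def L2' : Set (Fin 8 → ℝ) :=
  {x | (∑ i, x i) = 0 ∧ x 2 + x 3 + x 4 + x 5 = 0 ∧
    x 3 + x 4 + x 5 + x 6 = 0 ∧ x 4 + x 5 + x 6 + x 7 = 0}
def L3' : Set (Fin 8 → ℝ) :=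
  {x | (∑ i, x i) = 0 ∧ x 3 + x 4 + x 5 + x 6 = 0 ∧
    x 4 + x 5 + x 6 + x 7 = 0 ∧ x 5 + x 6 + x 7 + x 0 = 0}

lemma mem_image_eps (S : Set (Fin 8 → ℝ)) (x : Fin 8 → ℝ) :
    x ∈ cyclicShift8 '' S ↔ (fun i => x (i + 1)) ∈ S := by
  constructor
  · rintro ⟨y, hy, rfl⟩
    convert hy using 1
    funext i; simp [cyclicShift8]
  · intro h
    exact ⟨_, h, by funext i; simp [cyclicShift8]⟩

lemma mem_image_rev (S : Set (Fin 8 → ℝ)) (x : Fin 8 → ℝ) :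
    x ∈ rev8 '' S ↔ rev8 x ∈ S := by
  constructor
  · rintro ⟨y, hy, rfl⟩
    convert hy using 1
    funext i; simp [rev8]
  · intro h
    exact ⟨_, h, by funext i; simp [rev8]⟩

lemma eps_L0 : cyclicShift8 '' subspaceL8 = L1' := by
  ext x
  rw [mem_image_eps]
  simp only [subspaceL8, L1', Set.mem_setOf_eq, Fin.sum_univ_eight, Fin.isValue, Fin.reduceAdd]
  constructor <;> rintro ⟨h1, h2, h3, h4⟩ <;>
    exact ⟨by linarith, by linarith, by linarith, by linarith⟩

lemma eps_L1 : cyclicShift8 '' L1' = L2' := by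
  ext x
  rw [mem_image_eps]
  simp only [L1', L2', Set.mem_setOf_eq, Fin.sum_univ_eight, Fin.isValue, Fin.reduceAdd]
  constructor <;> rintro ⟨h1, h2, h3, h4⟩ <;>
    exact ⟨by linarith, by linarith, by linarith, by linarith⟩

lemma eps_L2 : cyclicShift8 '' L2' = L3' := by
  ext x
  rw [mem_image_eps]
  simp only [L2', L3', Set.mem_setOf_eq, Fin.sum_univ_eight, Fin.isValue, Fin.reduceAdd]
  constructor <;> rintro ⟨h1, h2, h3, h4⟩ <;>
    exact ⟨by linarith, by linarith, by linarith, by linarith⟩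

lemma eps_L3 : cyclicShift8 '' L3' = subspaceL8 := by
  ext x
  rw [mem_image_eps]
  simp only [subspaceL8, L3', Set.mem_setOf_eq, Fin.sum_univ_eight, Fin.isValue, Fin.reduceAdd]
  constructor <;> rintro ⟨h1, h2, h3, h4⟩ <;>
    exact ⟨by linarith, by linarith, by linarith, by linarith⟩

lemma rev_L0 : rev8 '' subspaceL8 = L2' := by
  ext x
  rw [mem_image_rev]
  simp only [subspaceL8, L2', Set.mem_setOf_eq, Fin.sum_univ_eight, rev8,
    show ((0:Fin 8).rev = 7) by decide, show ((1:Fin 8).rev = 6) by decide,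
    show ((2:Fin 8).rev = 5) by decide, show ((3:Fin 8).rev = 4) by decide,
    show ((4:Fin 8).rev = 3) by decide, show ((5:Fin 8).rev = 2) by decide,
    show ((6:Fin 8).rev = 1) by decide, show ((7:Fin 8).rev = 0) by decide]
  constructor <;> rintro ⟨h1, h2, h3, h4⟩ <;>
    exact ⟨by linarith, by linarith, by linarith, by linarith⟩

lemma rev_L1 : rev8 '' L1' = L1' := by
  ext x
  rw [mem_image_rev]
  simp only [L1', Set.mem_setOf_eq, Fin.sum_univ_eight, rev8,
    show ((0:Fin 8).rev = 7) by decide, show ((1:Fin 8).rev = 6) by decide,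
    show ((2:Fin 8).rev = 5) by decide, show ((3:Fin 8).rev = 4) by decide,
    show ((4:Fin 8).rev = 3) by decide, show ((5:Fin 8).rev = 2) by decide,
    show ((6:Fin 8).rev = 1) by decide, show ((7:Fin 8).rev = 0) by decide]
  constructor <;> rintro ⟨h1, h2, h3, h4⟩ <;>
    exact ⟨by linarith, by linarith, by linarith, by linarith⟩

lemma rev_L2 : rev8 '' L2' = subspaceL8 := by
  ext x
  rw [mem_image_rev]
  simp only [subspaceL8, L2', Set.mem_setOf_eq, Fin.sum_univ_eight, rev8,
    show ((0:Fin 8).rev = 7) by decide, show ((1:Fin 8).rev = 6) by decide,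
    show ((2:Fin 8).rev = 5) by decide, show ((3:Fin 8).rev = 4) by decide,
    show ((4:Fin 8).rev = 3) by decide, show ((5:Fin 8).rev = 2) by decide,
    show ((6:Fin 8).rev = 1) by decide, show ((7:Fin 8).rev = 0) by decide]
  constructor <;> rintro ⟨h1, h2, h3, h4⟩ <;>
    exact ⟨by linarith, by linarith, by linarith, by linarith⟩

lemma rev_L3 : rev8 '' L3' = L3' := by
  ext x
  rw [mem_image_rev]
  simp only [L3', Set.mem_setOf_eq, Fin.sum_univ_eight, rev8,
    show ((0:Fin 8).rev = 7) by decide, show ((1:Fin 8).rev = 6) by decide,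
    show ((2:Fin 8).rev = 5) by decide, show ((3:Fin 8).rev = 4) by decide,
    show ((4:Fin 8).rev = 3) by decide, show ((5:Fin 8).rev = 2) by decide,
    show ((6:Fin 8).rev = 1) by decide, show ((7:Fin 8).rev = 0) by decide]
  constructor <;> rintro ⟨h1, h2, h3, h4⟩ <;>
    exact ⟨by linarith, by linarith, by linarith, by linarith⟩

lemma eps2_L0 : (cyclicShift8^[2]) '' subspaceL8 = L2' := by
  rw [show cyclicShift8^[2] = cyclicShift8 ∘ cyclicShift8 from rfl, Set.image_comp,
    eps_L0, eps_L1]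

lemma eps3_L0 : (cyclicShift8^[3]) '' subspaceL8 = L3' := by
  rw [show cyclicShift8^[3] = cyclicShift8 ∘ (cyclicShift8 ∘ cyclicShift8) from rfl,
    Set.image_comp, Set.image_comp, eps_L0, eps_L1, eps_L2]

lemma iter_claim (k : ℕ) :
    (cyclicShift8^[k]) '' subspaceL8 = subspaceL8 ∨
    (cyclicShift8^[k]) '' subspaceL8 = L1' ∨
    (cyclicShift8^[k]) '' subspaceL8 = L2' ∨
    (cyclicShift8^[k]) '' subspaceL8 = L3' := by
  induction k with
  | zero => left; simp
  | succ n ih =>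
    rw [Function.iterate_succ', Set.image_comp]
    rcases ih with h | h | h | h <;> rw [h]
    · right; left; exact eps_L0
    · right; right; left; exact eps_L1
    · right; right; right; exact eps_L2
    · left; exact eps_L3

noncomputable def v0 : Fin 8 → ℝ := ![1, 0, 0, -1, 1, 0, 2, -3]
noncomputable def v1 : Fin 8 → ℝ := ![-3, 1, 0, 0, -1, 1, 0, 2]
noncomputable def v2 : Fin 8 → ℝ := ![2, -3, 1, 0, 0, -1, 1, 0]

lemma v0vals : v0 0 = 1 ∧ v0 1 = 0 ∧ v0 2 = 0 ∧ v0 3 = -1 ∧ v0 4 = 1 ∧ v0 5 = 0 ∧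
    v0 6 = 2 ∧ v0 7 = -3 := ⟨rfl, rfl, rfl, rfl, rfl, rfl, rfl, rfl⟩
lemma v1vals : v1 0 = -3 ∧ v1 1 = 1 ∧ v1 2 = 0 ∧ v1 3 = 0 ∧ v1 4 = -1 ∧ v1 5 = 1 ∧
    v1 6 = 0 ∧ v1 7 = 2 := ⟨rfl, rfl, rfl, rfl, rfl, rfl, rfl, rfl⟩
lemma v2vals : v2 0 = 2 ∧ v2 1 = -3 ∧ v2 2 = 1 ∧ v2 3 = 0 ∧ v2 4 = 0 ∧ v2 5 = -1 ∧
    v2 6 = 1 ∧ v2 7 = 0 := ⟨rfl, rfl, rfl, rfl, rfl, rfl, rfl, rfl⟩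

lemma ne01 : subspaceL8 ≠ L1' := by
  intro h
  have hm : v0 ∈ subspaceL8 := by
    simp only [subspaceL8, Set.mem_setOf_eq, Fin.sum_univ_eight, v0vals.1, v0vals.2.1,
      v0vals.2.2.1, v0vals.2.2.2.1, v0vals.2.2.2.2.1, v0vals.2.2.2.2.2.1,
      v0vals.2.2.2.2.2.2.1, v0vals.2.2.2.2.2.2.2]
    norm_num
  rw [h] at hm
  have := hm.2.2.2
  rw [v0vals.2.2.2.1, v0vals.2.2.2.2.1, v0vals.2.2.2.2.2.1, v0vals.2.2.2.2.2.2.1] at this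
  norm_num at this

lemma ne02 : subspaceL8 ≠ L2' := by
  intro h
  have hm : v0 ∈ subspaceL8 := by
    simp only [subspaceL8, Set.mem_setOf_eq, Fin.sum_univ_eight, v0vals.1, v0vals.2.1,
      v0vals.2.2.1, v0vals.2.2.2.1, v0vals.2.2.2.2.1, v0vals.2.2.2.2.2.1,
      v0vals.2.2.2.2.2.2.1, v0vals.2.2.2.2.2.2.2]
    norm_num
  rw [h] at hm
  have := hm.2.2.1
  rw [v0vals.2.2.2.1, v0vals.2.2.2.2.1, v0vals.2.2.2.2.2.1, v0vals.2.2.2.2.2.2.1] at this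
  norm_num at this

lemma ne03 : subspaceL8 ≠ L3' := by
  intro h
  have hm : v0 ∈ subspaceL8 := by
    simp only [subspaceL8, Set.mem_setOf_eq, Fin.sum_univ_eight, v0vals.1, v0vals.2.1,
      v0vals.2.2.1, v0vals.2.2.2.1, v0vals.2.2.2.2.1, v0vals.2.2.2.2.2.1,
      v0vals.2.2.2.2.2.2.1, v0vals.2.2.2.2.2.2.2]
    norm_num
  rw [h] at hm
  have := hm.2.1
  rw [v0vals.2.2.2.1, v0vals.2.2.2.2.1, v0vals.2.2.2.2.2.1, v0vals.2.2.2.2.2.2.1] at this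
  norm_num at this

lemma ne12 : L1' ≠ L2' := by
  intro h
  have hm : v1 ∈ L1' := by
    simp only [L1', Set.mem_setOf_eq, Fin.sum_univ_eight, v1vals.1, v1vals.2.1,
      v1vals.2.2.1, v1vals.2.2.2.1, v1vals.2.2.2.2.1, v1vals.2.2.2.2.2.1,
      v1vals.2.2.2.2.2.2.1, v1vals.2.2.2.2.2.2.2]
    norm_num
  rw [h] at hm
  have := hm.2.2.2
  rw [v1vals.2.2.2.2.1, v1vals.2.2.2.2.2.1, v1vals.2.2.2.2.2.2.1,
    v1vals.2.2.2.2.2.2.2] at this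
  norm_num at this

lemma ne13 : L1' ≠ L3' := by
  intro h
  have hm : v1 ∈ L1' := by
    simp only [L1', Set.mem_setOf_eq, Fin.sum_univ_eight, v1vals.1, v1vals.2.1,
      v1vals.2.2.1, v1vals.2.2.2.1, v1vals.2.2.2.2.1, v1vals.2.2.2.2.2.1,
      v1vals.2.2.2.2.2.2.1, v1vals.2.2.2.2.2.2.2]
    norm_num
  rw [h] at hm
  have := hm.2.2.1
  rw [v1vals.2.2.2.2.1, v1vals.2.2.2.2.2.1, v1vals.2.2.2.2.2.2.1,
    v1vals.2.2.2.2.2.2.2] at this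
  norm_num at this

lemma ne23 : L2' ≠ L3' := by
  intro h
  have hm : v2 ∈ L2' := by
    simp only [L2', Set.mem_setOf_eq, Fin.sum_univ_eight, v2vals.1, v2vals.2.1,
      v2vals.2.2.1, v2vals.2.2.2.1, v2vals.2.2.2.2.1, v2vals.2.2.2.2.2.1,
      v2vals.2.2.2.2.2.2.1, v2vals.2.2.2.2.2.2.2]
    norm_num
  rw [h] at hm
  have := hm.2.2.2
  rw [v2vals.1, v2vals.2.2.2.2.2.1, v2vals.2.2.2.2.2.2.1, v2vals.2.2.2.2.2.2.2] at this
  norm_num at this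

/-- `ε²L = jL`, and the minimal family of subspaces containing `L` that is invariant
under the dihedral group generated by the cyclic shift `ε` and the reversal `j`
consists of exactly the four (pairwise distinct) subspaces `L, εL, ε²L, ε³L`. -/
theorem orbit_of_L8_under_dihedral :
    (cyclicShift8^[2]) '' subspaceL8 = rev8 '' subspaceL8 ∧
    (∀ k : ℕ,
      (cyclicShift8^[k]) '' subspaceL8 ∈
        ({subspaceL8, cyclicShift8 '' subspaceL8, (cyclicShift8^[2]) '' subspaceL8,
          (cyclicShift8^[3]) '' subspaceL8} : Set (Set (Fin 8 → ℝ))) ∧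
      (rev8 ∘ (cyclicShift8^[k])) '' subspaceL8 ∈
        ({subspaceL8, cyclicShift8 '' subspaceL8, (cyclicShift8^[2]) '' subspaceL8,
          (cyclicShift8^[3]) '' subspaceL8} : Set (Set (Fin 8 → ℝ)))) ∧
    List.Pairwise (· ≠ ·)
      [subspaceL8, cyclicShift8 '' subspaceL8, (cyclicShift8^[2]) '' subspaceL8,
        (cyclicShift8^[3]) '' subspaceL8] := by
  refine ⟨by rw [eps2_L0, rev_L0], ?_, ?_⟩
  · intro k
    constructor
    · simp only [Set.mem_insert_iff, Set.mem_singleton_iff, eps_L0, eps2_L0, eps3_L0]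
      rcases iter_claim k with h | h | h | h <;> tauto
    · rw [Set.image_comp]
      simp only [Set.mem_insert_iff, Set.mem_singleton_iff, eps_L0, eps2_L0, eps3_L0]
      rcases iter_claim k with h | h | h | h <;> rw [h]
      · rw [rev_L0]; tauto
      · rw [rev_L1]; tauto
      · rw [rev_L2]; tauto
      · rw [rev_L3]; tauto
  · rw [eps_L0, eps2_L0, eps3_L0]
    refine List.Pairwise.cons ?_ (List.Pairwise.cons ?_ (List.Pairwise.cons ?_
      (List.pairwise_singleton _ _)))
    · intro a ha; fin_cases ha; exacts [ne01, ne02, ne03]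
    · intro a ha; fin_cases ha; exacts [ne12, ne13]
    · intro a ha; fin_cases ha; exact ne23
end

section
/- Let W₁₀ = {x ∈ ℝ¹⁰ : Σxᵢ = 0} with ε acting by cyclic shift, and let L ⊂ W₁₀ be defined by x₁+x₂+x₃+x₄+x₅ = x₂+x₃+x₄+x₅+x₆ = x₃+x₄+x₅+x₆+x₇ = 0. Then ε⁵L = L, and the orbit of L under the cyclic group ⟨ε⟩ has exactly five elements L, εL, ε²L, ε³L, ε⁴L. -/
def cyclicShift10 (x : Fin 10 → ℝ) : Fin 10 → ℝ := fun i => x (i - 1)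

def subspaceL10 : Set (Fin 10 → ℝ) :=
  {x | (∑ i, x i) = 0 ∧ x 0 + x 1 + x 2 + x 3 + x 4 = 0 ∧
    x 1 + x 2 + x 3 + x 4 + x 5 = 0 ∧ x 2 + x 3 + x 4 + x 5 + x 6 = 0}

lemma shift_inj : Function.Injective cyclicShift10 := by
  intro x y h
  funext i
  have := congrFun h (i + 1)
  simpa [cyclicShift10] using this

lemma image_shift (S : Set (Fin 10 → ℝ)) :
    cyclicShift10 '' S = {x | (fun i => x (i + 1)) ∈ S} := by
  ext x
  constructor
  · rintro ⟨y, hy, rfl⟩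
    have h : (fun i => cyclicShift10 y (i + 1)) = y := by
      funext i; simp [cyclicShift10]
    simpa [Set.mem_setOf_eq, h] using hy
  · intro hx
    exact ⟨fun i => x (i + 1), hx, by funext i; simp [cyclicShift10]⟩

lemma sum_shift (x : Fin 10 → ℝ) : (∑ i, x (i + 1)) = ∑ i, x i :=
  Equiv.sum_comp (Equiv.addRight 1) x

lemma sum_expand (x : Fin 10 → ℝ) :
    (∑ i, x i) = x 0 + x 1 + x 2 + x 3 + x 4 + x 5 + x 6 + x 7 + x 8 + x 9 := by
  simp [Fin.sum_univ_succ, Fin.succ]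
  ring

def LL1 : Set (Fin 10 → ℝ) :=
  {x | (∑ i, x i) = 0 ∧ x 1 + x 2 + x 3 + x 4 + x 5 = 0 ∧
    x 2 + x 3 + x 4 + x 5 + x 6 = 0 ∧ x 3 + x 4 + x 5 + x 6 + x 7 = 0}

def LL2 : Set (Fin 10 → ℝ) :=
  {x | (∑ i, x i) = 0 ∧ x 2 + x 3 + x 4 + x 5 + x 6 = 0 ∧
    x 3 + x 4 + x 5 + x 6 + x 7 = 0 ∧ x 4 + x 5 + x 6 + x 7 + x 8 = 0}

def LL3 : Set (Fin 10 → ℝ) :=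
  {x | (∑ i, x i) = 0 ∧ x 3 + x 4 + x 5 + x 6 + x 7 = 0 ∧
    x 4 + x 5 + x 6 + x 7 + x 8 = 0 ∧ x 5 + x 6 + x 7 + x 8 + x 9 = 0}

def LL4 : Set (Fin 10 → ℝ) :=
  {x | (∑ i, x i) = 0 ∧ x 4 + x 5 + x 6 + x 7 + x 8 = 0 ∧
    x 5 + x 6 + x 7 + x 8 + x 9 = 0 ∧ x 6 + x 7 + x 8 + x 9 + x 0 = 0}


lemma hL1 : cyclicShift10 '' subspaceL10 = LL1 := by
  rw [image_shift]; ext x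
  simp only [subspaceL10, LL1, Set.mem_setOf_eq, sum_shift,
    show ((0 : Fin 10) + 1) = 1 from rfl, show ((1 : Fin 10) + 1) = 2 from rfl,
    show ((2 : Fin 10) + 1) = 3 from rfl, show ((3 : Fin 10) + 1) = 4 from rfl,
    show ((4 : Fin 10) + 1) = 5 from rfl, show ((5 : Fin 10) + 1) = 6 from rfl,
    show ((6 : Fin 10) + 1) = 7 from rfl]

lemma hL2 : cyclicShift10 '' LL1 = LL2 := by
  rw [image_shift]; ext x
  simp only [LL1, LL2, Set.mem_setOf_eq, sum_shift,
    show ((1 : Fin 10) + 1) = 2 from rfl, show ((2 : Fin 10) + 1) = 3 from rfl,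
    show ((3 : Fin 10) + 1) = 4 from rfl, show ((4 : Fin 10) + 1) = 5 from rfl,
    show ((5 : Fin 10) + 1) = 6 from rfl, show ((6 : Fin 10) + 1) = 7 from rfl,
    show ((7 : Fin 10) + 1) = 8 from rfl]

lemma hL3 : cyclicShift10 '' LL2 = LL3 := by
  rw [image_shift]; ext x
  simp only [LL2, LL3, Set.mem_setOf_eq, sum_shift,
    show ((2 : Fin 10) + 1) = 3 from rfl, show ((3 : Fin 10) + 1) = 4 from rfl,
    show ((4 : Fin 10) + 1) = 5 from rfl, show ((5 : Fin 10) + 1) = 6 from rfl,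
    show ((6 : Fin 10) + 1) = 7 from rfl, show ((7 : Fin 10) + 1) = 8 from rfl,
    show ((8 : Fin 10) + 1) = 9 from rfl]

lemma hL4 : cyclicShift10 '' LL3 = LL4 := by
  rw [image_shift]; ext x
  simp only [LL3, LL4, Set.mem_setOf_eq, sum_shift,
    show ((3 : Fin 10) + 1) = 4 from rfl, show ((4 : Fin 10) + 1) = 5 from rfl,
    show ((5 : Fin 10) + 1) = 6 from rfl, show ((6 : Fin 10) + 1) = 7 from rfl,
    show ((7 : Fin 10) + 1) = 8 from rfl, show ((8 : Fin 10) + 1) = 9 from rfl,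
    show ((9 : Fin 10) + 1) = 0 from rfl]

lemma hL5 : cyclicShift10 '' LL4 = subspaceL10 := by
  rw [image_shift]; ext x
  simp only [LL4, subspaceL10, Set.mem_setOf_eq, sum_shift,
    show ((9 : Fin 10) + 1) = 0 from rfl, show ((0 : Fin 10) + 1) = 1 from rfl,
    show ((1 : Fin 10) + 1) = 2 from rfl, show ((2 : Fin 10) + 1) = 3 from rfl,
    show ((3 : Fin 10) + 1) = 4 from rfl, show ((4 : Fin 10) + 1) = 5 from rfl,
    show ((5 : Fin 10) + 1) = 6 from rfl, show ((6 : Fin 10) + 1) = 7 from rfl,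
    show ((7 : Fin 10) + 1) = 8 from rfl, show ((8 : Fin 10) + 1) = 9 from rfl]
  rw [sum_expand]
  constructor
  · rintro ⟨h0, h1, h2, h3⟩
    exact ⟨h0, by linarith, by linarith, by linarith⟩
  · rintro ⟨h0, h1, h2, h3⟩
    exact ⟨h0, by linarith, by linarith, by linarith⟩

lemma iterS (k : ℕ) (S : Set (Fin 10 → ℝ)) :
    (cyclicShift10^[k+1]) '' S = cyclicShift10 '' ((cyclicShift10^[k]) '' S) := by
  rw [Function.iterate_succ', Set.image_comp]

lemma iter2 : (cyclicShift10^[2]) '' subspaceL10 = LL2 := by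
  rw [iterS, Function.iterate_one, hL1, hL2]

lemma iter3 : (cyclicShift10^[3]) '' subspaceL10 = LL3 := by
  rw [iterS, iter2, hL3]

lemma iter4 : (cyclicShift10^[4]) '' subspaceL10 = LL4 := by
  rw [iterS, iter3, hL4]

lemma iter5 : (cyclicShift10^[5]) '' subspaceL10 = subspaceL10 := by
  rw [iterS, iter4, hL5]

noncomputable def wit : Fin 10 → ℝ := ![0, 0, 0, 1, -1, 0, 0, 1, -1, 0]

lemma w0 : wit 0 = 0 := rfl
lemma w1 : wit 1 = 0 := rfl
lemma w2 : wit 2 = 0 := rfl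
lemma w3 : wit 3 = 1 := rfl
lemma w4 : wit 4 = -1 := rfl
lemma w5 : wit 5 = 0 := rfl
lemma w6 : wit 6 = 0 := rfl
lemma w7 : wit 7 = 1 := rfl
lemma w8 : wit 8 = -1 := rfl
lemma w9 : wit 9 = 0 := rfl

lemma wit_L0 : wit ∈ subspaceL10 := by
  refine ⟨?_, ?_, ?_, ?_⟩ <;>
    simp [subspaceL10, sum_expand, w0, w1, w2, w3, w4, w5, w6, w7, w8, w9]

lemma wit_not_L1 : wit ∉ LL1 := by
  rintro ⟨-, -, -, h⟩
  rw [w3, w4, w5, w6, w7] at h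
  norm_num at h

lemma wit_not_L2 : wit ∉ LL2 := by
  rintro ⟨-, -, h, -⟩
  rw [w3, w4, w5, w6, w7] at h
  norm_num at h

lemma wit_not_L3 : wit ∉ LL3 := by
  rintro ⟨-, h, -, -⟩
  rw [w3, w4, w5, w6, w7] at h
  norm_num at h

lemma wit_not_L4 : wit ∉ LL4 := by
  rintro ⟨-, h, -, -⟩
  rw [w4, w5, w6, w7, w8] at h
  norm_num at h

lemma L0_ne_L1 : subspaceL10 ≠ LL1 := fun h => wit_not_L1 (h ▸ wit_L0)
lemma L0_ne_L2 : subspaceL10 ≠ LL2 := fun h => wit_not_L2 (h ▸ wit_L0)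
lemma L0_ne_L3 : subspaceL10 ≠ LL3 := fun h => wit_not_L3 (h ▸ wit_L0)
lemma L0_ne_L4 : subspaceL10 ≠ LL4 := fun h => wit_not_L4 (h ▸ wit_L0)

lemma img_inj : Function.Injective (Set.image cyclicShift10) :=
  Set.image_injective.mpr shift_inj

lemma L1_ne_L2 : LL1 ≠ LL2 := fun h =>
  L0_ne_L1 (img_inj (by rw [hL1, hL2]; exact h))
lemma L1_ne_L3 : LL1 ≠ LL3 := fun h =>
  L0_ne_L2 (img_inj (by rw [hL1, hL3]; exact h))
lemma L1_ne_L4 : LL1 ≠ LL4 := fun h =>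
  L0_ne_L3 (img_inj (by rw [hL1, hL4]; exact h))
lemma L2_ne_L3 : LL2 ≠ LL3 := fun h =>
  L1_ne_L2 (img_inj (by rw [hL2, hL3]; exact h))
lemma L2_ne_L4 : LL2 ≠ LL4 := fun h =>
  L1_ne_L3 (img_inj (by rw [hL2, hL4]; exact h))
lemma L3_ne_L4 : LL3 ≠ LL4 := fun h =>
  L2_ne_L3 (img_inj (by rw [hL3, hL4]; exact h))

lemma orbit_claim (k : ℕ) :
    (cyclicShift10^[k]) '' subspaceL10 = subspaceL10 ∨
    (cyclicShift10^[k]) '' subspaceL10 = LL1 ∨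
    (cyclicShift10^[k]) '' subspaceL10 = LL2 ∨
    (cyclicShift10^[k]) '' subspaceL10 = LL3 ∨
    (cyclicShift10^[k]) '' subspaceL10 = LL4 := by
  induction k with
  | zero => exact Or.inl (by simp)
  | succ n ih =>
    rcases ih with h | h | h | h | h <;> rw [iterS, h]
    · exact Or.inr (Or.inl hL1)
    · exact Or.inr (Or.inr (Or.inl hL2))
    · exact Or.inr (Or.inr (Or.inr (Or.inl hL3)))
    · exact Or.inr (Or.inr (Or.inr (Or.inr hL4)))
    · exact Or.inl hL5

/-- `ε⁵L = L`, and the orbit of `L` under the cyclic group generated by `ε`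
has exactly the five (pairwise distinct) elements `L, εL, ε²L, ε³L, ε⁴L`. -/
theorem orbit_of_L10_under_cyclic :
    (cyclicShift10^[5]) '' subspaceL10 = subspaceL10 ∧
    (∀ k : ℕ,
      (cyclicShift10^[k]) '' subspaceL10 ∈
        ({subspaceL10, cyclicShift10 '' subspaceL10, (cyclicShift10^[2]) '' subspaceL10,
          (cyclicShift10^[3]) '' subspaceL10, (cyclicShift10^[4]) '' subspaceL10} :
          Set (Set (Fin 10 → ℝ)))) ∧
    List.Pairwise (· ≠ ·)
      [subspaceL10, cyclicShift10 '' subspaceL10, (cyclicShift10^[2]) '' subspaceL10,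
        (cyclicShift10^[3]) '' subspaceL10, (cyclicShift10^[4]) '' subspaceL10] := by
  refine ⟨iter5, ?_, ?_⟩
  · intro k
    simp only [Set.mem_insert_iff, Set.mem_singleton_iff, hL1, iter2, iter3, iter4]
    exact orbit_claim k
  · rw [hL1, iter2, iter3, iter4]
    refine List.Pairwise.cons ?_ (List.Pairwise.cons ?_ (List.Pairwise.cons ?_
      (List.Pairwise.cons ?_ (List.Pairwise.cons ?_ List.Pairwise.nil))))
    · intro S hS
      simp only [List.mem_cons, List.not_mem_nil, or_false] at hS
      rcases hS with rfl | rfl | rfl | rfl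
      exacts [L0_ne_L1, L0_ne_L2, L0_ne_L3, L0_ne_L4]
    · intro S hS
      simp only [List.mem_cons, List.not_mem_nil, or_false] at hS
      rcases hS with rfl | rfl | rfl
      exacts [L1_ne_L2, L1_ne_L3, L1_ne_L4]
    · intro S hS
      simp only [List.mem_cons, List.not_mem_nil, or_false] at hS
      rcases hS with rfl | rfl
      exacts [L2_ne_L3, L2_ne_L4]
    · intro S hS
      simp only [List.mem_cons, List.not_mem_nil, or_false] at hS
      rcases hS with rfl
      exact L3_ne_L4
    · intro S hS
      simp at hS
end
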